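/- Let G be the PEG over Σ = {a, b, c} with nonterminals S, A, B, C, axiom S, and rules S ← A(!C) / B, A ← aAb / ε, B ← aBc / ε, C ← a / b. Then L(G) = {aⁿbⁿ | n ≥ 0} ∪ {aⁿcⁿ | n ≥ 0}. -/
import Mathlib


/-! ### Parsing expression grammars -/

/-- Parsing expressions over nonterminals `N` and input alphabet `A`:
`ε`, terminals, nonterminals, sequence, prioritized choice, not-predicate. -/
inductive PExp (N A : Type) : Type where
  | eps : PExp N A
  | term : A → PExp N A
  | nt : N → PExp N A
  | seq : PExp N A → PExp N A → PExp N A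
  | choice : PExp N A → PExp N A → PExp N A
  | not : PExp N A → PExp N A

/-- A parsing expression grammar: one rule per nonterminal, and an axiom. -/
structure PEG (N A : Type) : Type where
  rule : N → PExp N A
  start : N

/-- Big-step relational semantics of the PEG parsing function `R`:
`Parses G e w r` means `R(e, w) = r`, where `r = none` encodes the failure `F`
and `r = some s` means that `e` consumed a prefix of `w` leaving the suffix `s`.
`R(e, w)` is defined iff `∃ r, Parses G e w r`. -/
inductive Parses {N A : Type} (G : PEG N A) : PExp N A → List A → Option (List A) → Prop where
  | eps (w : List A) : Parses G .eps w (some w)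
  | term_ok (a : A) (s : List A) : Parses G (.term a) (a :: s) (some s)
  | term_mismatch {a b : A} (s : List A) (h : a ≠ b) : Parses G (.term a) (b :: s) none
  | term_nil (a : A) : Parses G (.term a) [] none
  | nt {B : N} {w : List A} {r : Option (List A)} :
      Parses G (G.rule B) w r → Parses G (.nt B) w r
  | seq_ok {e₁ e₂ : PExp N A} {w w' : List A} {r : Option (List A)} :
      Parses G e₁ w (some w') → Parses G e₂ w' r → Parses G (.seq e₁ e₂) w r
  | seq_fail {e₁ e₂ : PExp N A} {w : List A} :
      Parses G e₁ w none → Parses G (.seq e₁ e₂) w none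
  | choice_fst {e₁ e₂ : PExp N A} {w w' : List A} :
      Parses G e₁ w (some w') → Parses G (.choice e₁ e₂) w (some w')
  | choice_snd {e₁ e₂ : PExp N A} {w : List A} {r : Option (List A)} :
      Parses G e₁ w none → Parses G e₂ w r → Parses G (.choice e₁ e₂) w r
  | not_succ {e : PExp N A} {w : List A} :
      Parses G e w none → Parses G (.not e) w (some w)
  | not_fail {e : PExp N A} {w w' : List A} :
      Parses G e w (some w') → Parses G (.not e) w none

/-- The language generated by a PEG: `L(G) = {w | R(S, w) = ε}`. -/
def PEG.Lang {N A : Type} (G : PEG N A) : Set (List A) :=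
  {w | Parses G (.nt G.start) w (some [])}

/-- A PEG is complete if `R(S, w)` is defined for every input `w`. -/
def PEG.Complete {N A : Type} (G : PEG N A) : Prop :=
  ∀ w : List A, ∃ r, Parses G (.nt G.start) w r

/-- The three-letter alphabet `{a, b, c}`. -/
inductive Abc : Type where
  | a | b | c
deriving DecidableEq

/-- The four nonterminals `S`, `A`, `B`, `C`. -/
inductive Nt13 : Type where
  | S | A | B | C
deriving DecidableEq

/-- The PEG with rules `S ← A(!C) / B`, `A ← aAb / ε`, `B ← aBc / ε`, `C ← a / b`. -/
def G13 : PEG Nt13 Abc where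
  start := .S
  rule := fun n =>
    match n with
    | .S => .choice (.seq (.nt .A) (.not (.nt .C))) (.nt .B)
    | .A => .choice (.seq (.term .a) (.seq (.nt .A) (.term .b))) .eps
    | .B => .choice (.seq (.term .a) (.seq (.nt .B) (.term .c))) .eps
    | .C => .choice (.term .a) (.term .b)

/-! ### Auxiliary lemmas -/

open Abc Nt13 PExp List

lemma rep_cons (x : Abc) (m : ℕ) (t : List Abc) :
    List.replicate m x ++ x :: t = x :: (List.replicate m x ++ t) := by
  induction m with
  | zero => rfl
  | succ m ihm => simp [List.replicate_succ, ihm]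

lemma term_some {x : Abc} {w s : List Abc} (h : Parses G13 (.term x) w (some s)) :
    w = x :: s := by
  cases h; rfl

lemma seq_some_inv {e1 e2 : PExp Nt13 Abc} {w s : List Abc}
    (h : Parses G13 (.seq e1 e2) w (some s)) :
    ∃ w1, Parses G13 e1 w (some w1) ∧ Parses G13 e2 w1 (some s) := by
  cases h with
  | seq_ok h1 h2 => exact ⟨_, h1, h2⟩

lemma A_char (k : ℕ) : ∀ w : List Abc, w.length ≤ k → ∀ r, Parses G13 (.nt .A) w r →
    ∃ n s, w = List.replicate n Abc.a ++ List.replicate n Abc.b ++ s ∧ r = some s := by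
  induction k with
  | zero =>
    intro w hw r h
    have hw0 : w = [] := List.eq_nil_of_length_eq_zero (Nat.le_zero.mp hw)
    subst hw0
    cases h with
    | nt h =>
      have h' : Parses G13 (PExp.choice (PExp.seq (PExp.term Abc.a)
          (PExp.seq (PExp.nt Nt13.A) (PExp.term Abc.b))) PExp.eps) [] r := h
      cases h' with
      | choice_fst h1 => cases h1 with
        | seq_ok h2 h3 => cases h2
      | choice_snd h1 h2 =>
        cases h2
        exact ⟨0, [], by simp, rfl⟩
  | succ k ih =>
    intro w hw r h
    cases h with
    | nt h =>
      have h' : Parses G13 (PExp.choice (PExp.seq (PExp.term Abc.a)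
          (PExp.seq (PExp.nt Nt13.A) (PExp.term Abc.b))) PExp.eps) w r := h
      cases h' with
      | @choice_fst _ _ _ w' h1 =>
        obtain ⟨w1, h2, h3⟩ := seq_some_inv h1
        obtain rfl := term_some h2
        obtain ⟨w2, h4, h5⟩ := seq_some_inv h3
        obtain ⟨n, s, rfl, hs⟩ := ih w1 (by simp only [List.length_cons] at hw; omega) _ h4
        injection hs with hs; subst hs
        obtain rfl := term_some h5
        refine ⟨n + 1, w', ?_, rfl⟩
        simp [List.replicate_succ, List.append_assoc, rep_cons]
      | choice_snd h1 h2 =>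
        cases h2
        exact ⟨0, w, by simp, rfl⟩

lemma B_char (k : ℕ) : ∀ w : List Abc, w.length ≤ k → ∀ r, Parses G13 (.nt .B) w r →
    ∃ n s, w = List.replicate n Abc.a ++ List.replicate n Abc.c ++ s ∧ r = some s := by
  induction k with
  | zero =>
    intro w hw r h
    have hw0 : w = [] := List.eq_nil_of_length_eq_zero (Nat.le_zero.mp hw)
    subst hw0
    cases h with
    | nt h =>
      have h' : Parses G13 (PExp.choice (PExp.seq (PExp.term Abc.a)
          (PExp.seq (PExp.nt Nt13.B) (PExp.term Abc.c))) PExp.eps) [] r := h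
      cases h' with
      | choice_fst h1 => cases h1 with
        | seq_ok h2 h3 => cases h2
      | choice_snd h1 h2 =>
        cases h2
        exact ⟨0, [], by simp, rfl⟩
  | succ k ih =>
    intro w hw r h
    cases h with
    | nt h =>
      have h' : Parses G13 (PExp.choice (PExp.seq (PExp.term Abc.a)
          (PExp.seq (PExp.nt Nt13.B) (PExp.term Abc.c))) PExp.eps) w r := h
      cases h' with
      | @choice_fst _ _ _ w' h1 =>
        obtain ⟨w1, h2, h3⟩ := seq_some_inv h1
        obtain rfl := term_some h2
        obtain ⟨w2, h4, h5⟩ := seq_some_inv h3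
        obtain ⟨n, s, rfl, hs⟩ := ih w1 (by simp only [List.length_cons] at hw; omega) _ h4
        injection hs with hs; subst hs
        obtain rfl := term_some h5
        refine ⟨n + 1, w', ?_, rfl⟩
        simp [List.replicate_succ, List.append_assoc, rep_cons]
      | choice_snd h1 h2 =>
        cases h2
        exact ⟨0, w, by simp, rfl⟩

/-- `A` consumes `aⁿbⁿ` when the remainder does not start with `a`. -/
lemma A_parse (n : ℕ) : ∀ s : List Abc, s.head? ≠ some Abc.a →
    Parses G13 (.nt .A) (List.replicate n Abc.a ++ List.replicate n Abc.b ++ s) (some s) := by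
  induction n with
  | zero =>
    intro s hs
    refine .nt (.choice_snd (.seq_fail ?_) (.eps s))
    match s, hs with
    | [], _ => exact .term_nil _
    | x :: t, hs => exact .term_mismatch t (by rintro rfl; simp at hs)
  | succ n ih =>
    intro s hs
    have key := ih (Abc.b :: s) (by simp)
    refine .nt (.choice_fst (.seq_ok (.term_ok _ _) (.seq_ok ?_ (.term_ok _ _))))
    have : List.replicate n Abc.a ++ List.replicate n Abc.b ++ (Abc.b :: s)
        = List.replicate n Abc.a ++ List.replicate (n+1) Abc.b ++ s := by
      simp [List.replicate_succ' (n := n) (a := Abc.b)]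
    rw [this] at key
    have hw : List.replicate (n+1) Abc.a ++ List.replicate (n+1) Abc.b ++ s
        = Abc.a :: (List.replicate n Abc.a ++ List.replicate (n+1) Abc.b ++ s) := by
      simp [List.replicate_succ]
    exact key

lemma B_parse (n : ℕ) : ∀ s : List Abc, s.head? ≠ some Abc.a →
    Parses G13 (.nt .B) (List.replicate n Abc.a ++ List.replicate n Abc.c ++ s) (some s) := by
  induction n with
  | zero =>
    intro s hs
    refine .nt (.choice_snd (.seq_fail ?_) (.eps s))
    match s, hs with
    | [], _ => exact .term_nil _
    | x :: t, hs => exact .term_mismatch t (by rintro rfl; simp at hs)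
  | succ n ih =>
    intro s hs
    have key := ih (Abc.c :: s) (by simp)
    refine .nt (.choice_fst (.seq_ok (.term_ok _ _) (.seq_ok ?_ (.term_ok _ _))))
    have : List.replicate n Abc.a ++ List.replicate n Abc.c ++ (Abc.c :: s)
        = List.replicate n Abc.a ++ List.replicate (n+1) Abc.c ++ s := by
      simp [List.replicate_succ' (n := n) (a := Abc.c)]
    rw [this] at key
    exact key

/-- `A` fails to consume anything on `aᵏcᵐ` with `m ≥ 1`. -/
lemma A_stuck (k : ℕ) : ∀ m : ℕ, 1 ≤ m →
    Parses G13 (.nt .A) (List.replicate k Abc.a ++ List.replicate m Abc.c)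
      (some (List.replicate k Abc.a ++ List.replicate m Abc.c)) := by
  induction k with
  | zero =>
    intro m hm
    obtain ⟨m', rfl⟩ := Nat.exists_eq_add_of_le hm
    refine .nt (.choice_snd (.seq_fail ?_) (.eps _))
    simp only [List.nil_append, List.replicate_succ, Nat.add_comm]
    exact .term_mismatch _ (by simp)
  | succ k ih =>
    intro m hm
    have key := ih m hm
    have hb : Parses G13 (PExp.term Abc.b)
        (List.replicate k Abc.a ++ List.replicate m Abc.c) none := by
      cases k with
      | zero =>
        obtain ⟨m', rfl⟩ := Nat.exists_eq_add_of_le hm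
        simp only [List.nil_append, List.replicate_succ, Nat.add_comm]
        exact .term_mismatch _ (by simp)
      | succ k' =>
        simp only [List.replicate_succ, List.cons_append]
        exact .term_mismatch _ (by simp)
    refine .nt (.choice_snd (.seq_ok (.term_ok _ _) (.seq_ok key hb)) (.eps _))

/-- The PEG `G13` generates
`{aⁿbⁿ | n ≥ 0} ∪ {aⁿcⁿ | n ≥ 0}`. -/
theorem g13_lang :
    G13.Lang =
      {w | ∃ n : ℕ, w = List.replicate n Abc.a ++ List.replicate n Abc.b} ∪
      {w | ∃ n : ℕ, w = List.replicate n Abc.a ++ List.replicate n Abc.c} := by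
  ext w
  constructor
  · intro hw
    cases hw with
    | nt h =>
      have h' : Parses G13 (PExp.choice (PExp.seq (PExp.nt Nt13.A) (PExp.not (PExp.nt Nt13.C)))
          (PExp.nt Nt13.B)) w (some []) := h
      cases h' with
      | choice_fst h1 =>
        cases h1 with
        | seq_ok h2 h3 =>
          obtain ⟨n, s, rfl, hs⟩ := A_char _ _ le_rfl _ h2
          cases hs
          cases h3 with
          | not_succ h4 =>
            left
            exact ⟨n, by simp⟩
      | choice_snd h1 h2 =>
        obtain ⟨n, s, rfl, hs⟩ := B_char _ _ le_rfl _ h2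
        right
        refine ⟨n, ?_⟩
        cases hs
        simp
  · rintro (⟨n, rfl⟩ | ⟨n, rfl⟩)
    · -- aⁿbⁿ : first branch of S succeeds
      have hA := A_parse n [] (by simp)
      simp only [List.append_nil] at hA
      have hC : Parses G13 (PExp.nt Nt13.C) ([] : List Abc) none :=
        .nt (.choice_snd (.term_nil _) (.term_nil _))
      exact .nt (.choice_fst (.seq_ok hA (.not_succ hC)))
    · cases n with
      | zero =>
        have hA := A_parse 0 [] (by simp)
        simp only [List.append_nil] at hA
        have hC : Parses G13 (PExp.nt Nt13.C) ([] : List Abc) none :=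
          .nt (.choice_snd (.term_nil _) (.term_nil _))
        exact .nt (.choice_fst (.seq_ok hA (.not_succ hC)))
      | succ n =>
        -- first branch fails since C succeeds on input starting with a
        have hA := A_stuck (n+1) (n+1) (by omega)
        have hC : Parses G13 (PExp.nt Nt13.C)
            (List.replicate (n+1) Abc.a ++ List.replicate (n+1) Abc.c)
            (some (List.replicate n Abc.a ++ List.replicate (n+1) Abc.c)) := by
          refine .nt (.choice_fst ?_)
          simp only [List.replicate_succ, List.cons_append]
          exact .term_ok _ _
        have hB := B_parse (n+1) [] (by simp)
        simp only [List.append_nil] at hB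
        exact .nt (.choice_snd (.seq_ok hA (.not_fail hC)) hB)
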